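/- Let L = L₀ ⊕ L₁ be a restricted Lie superalgebra over a field of characteristic p > 2 such that L is nilpotent, (L₀,L₀) is p-nilpotent, dim L₁ = 1 with (L₁,L₀) = 0, and the ideal [u(L),u(L)]u(L) of the restricted enveloping algebra u(L) is nil of bounded index p^m. Then u(L) is bounded Lie Engel. -/

import Mathlib

/-- A Lie superalgebra structure on an `F`-module `L`: an internal direct sum
decomposition `L = L₀ ⊕ L₁` together with a bilinear bracket satisfying the grading,
super-anticommutativity and super-Jacobi identities (the latter two stated for
homogeneous arguments and extended by bilinearity). -/
structure LieSuperStruct (F : Type*) (L : Type*) [Field F] [AddCommGroup L]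
    [Module F L] where
  L0 : Submodule F L
  L1 : Submodule F L
  compl : IsCompl L0 L1
  bracket : L →ₗ[F] L →ₗ[F] L
  grade00 : ∀ x ∈ L0, ∀ y ∈ L0, bracket x y ∈ L0
  grade01 : ∀ x ∈ L0, ∀ y ∈ L1, bracket x y ∈ L1
  grade10 : ∀ x ∈ L1, ∀ y ∈ L0, bracket x y ∈ L1
  grade11 : ∀ x ∈ L1, ∀ y ∈ L1, bracket x y ∈ L0
  anti_even : ∀ x ∈ L0, ∀ y : L, bracket x y = - bracket y x
  anti_odd : ∀ x ∈ L1, ∀ y ∈ L1, bracket x y = bracket y x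
  jacobi_even : ∀ x ∈ L0, ∀ y z : L,
    bracket x (bracket y z) = bracket (bracket x y) z + bracket y (bracket x z)
  jacobi_odd_even : ∀ x ∈ L1, ∀ y ∈ L0, ∀ z : L,
    bracket x (bracket y z) = bracket (bracket x y) z + bracket y (bracket x z)
  jacobi_odd_odd : ∀ x ∈ L1, ∀ y ∈ L1, ∀ z : L,
    bracket x (bracket y z) = bracket (bracket x y) z - bracket y (bracket x z)

namespace LieSuperStruct

variable {F L : Type*} [Field F] [AddCommGroup L] [Module F L]

/-- The span of all brackets `(x, y)` with `x ∈ M`, `y ∈ N`. -/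
def bracketSpan (S : LieSuperStruct F L) (M N : Submodule F L) : Submodule F L :=
  Submodule.span F {w | ∃ x ∈ M, ∃ y ∈ N, w = S.bracket x y}

/-- Lower central series of a subalgebra `N`: `γ₁ = N`, `γ_{n+1} = (γₙ, N)`. -/
def lcsOn (S : LieSuperStruct F L) (N : Submodule F L) : ℕ → Submodule F L
  | 0 => N
  | n + 1 => S.bracketSpan (S.lcsOn N n) N

/-- Lower central series of `L` itself. -/
def lcs (S : LieSuperStruct F L) : ℕ → Submodule F L := S.lcsOn ⊤

/-- A Lie superalgebra is nilpotent if its lower central series vanishes. -/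
def IsNilpotent (S : LieSuperStruct F L) : Prop := ∃ n, S.lcs n = ⊥

/-- `A` is an ideal of `L`. -/
def IsIdeal (S : LieSuperStruct F L) (A : Submodule F L) : Prop :=
  ∀ x ∈ A, ∀ y : L, S.bracket x y ∈ A ∧ S.bracket y x ∈ A

/-- `A` is a homogeneous (graded) submodule. -/
def IsHomogeneous (S : LieSuperStruct F L) (A : Submodule F L) : Prop :=
  A = (A ⊓ S.L0) ⊔ (A ⊓ S.L1)

/-- The adjoint map of `x`. -/
def ad (S : LieSuperStruct F L) (x : L) : Module.End F L := S.bracket x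

end LieSuperStruct

/-- The left-normed `n`-fold iterated Lie commutator `[x, y, y, …, y]` in an
associative ring. -/
def engelIter {U : Type*} [Ring U] (y : U) (n : ℕ) (x : U) : U :=
  (fun a => a * y - y * a)^[n] x

/-- An associative ring is bounded Lie Engel if it satisfies `[x, y, …, y] = 0`
(`y` repeated `n` times) identically for some `n ≥ 1`. -/
def IsBoundedLieEngel (U : Type*) [Ring U] : Prop :=
  ∃ n : ℕ, 0 < n ∧ ∀ x y : U, engelIter y n x = 0

/-- The (two-sided) ideal of an associative `F`-algebra generated by all
commutators, as an `F`-submodule. -/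
def commIdeal (F U : Type*) [Field F] [Ring U] [Algebra F U] : Submodule F U :=
  Submodule.span F {w | ∃ a x y b : U, w = a * (x * y - y * x) * b}

/-- Lower central series of the associative algebra `U` viewed as a Lie algebra
under the commutator. -/
def assocLcs (F U : Type*) [Field F] [Ring U] [Algebra F U] : ℕ → Submodule F U
  | 0 => ⊤
  | n + 1 => Submodule.span F {w | ∃ a ∈ assocLcs F U n, ∃ b : U, w = a * b - b * a}

/-- `U` is Lie nilpotent: the lower central series of `(U, [·,·])` terminates. -/
def IsLieNilpotentAlg (F U : Type*) [Field F] [Ring U] [Algebra F U] : Prop :=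
  ∃ n, assocLcs F U n = ⊥

/-- `U` satisfies a (nontrivial) polynomial identity. -/
def IsPI (F U : Type*) [Field F] [Ring U] [Algebra F U] : Prop :=
  ∃ (n : ℕ) (f : FreeAlgebra F (Fin n)), f ≠ 0 ∧
    ∀ v : Fin n → U, FreeAlgebra.lift F v f = 0

/-- `U` satisfies a non-matrix polynomial identity: a PI which fails in `M₂(F)`. -/
def IsNonMatrixPI (F U : Type*) [Field F] [Ring U] [Algebra F U] : Prop :=
  ∃ (n : ℕ) (f : FreeAlgebra F (Fin n)),
    (∀ v : Fin n → U, FreeAlgebra.lift F v f = 0) ∧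
    ∃ w : Fin n → Matrix (Fin 2) (Fin 2) F, FreeAlgebra.lift F w f ≠ 0

/-- `U` together with `ι : L → U` is (a realization of) the universal enveloping
algebra of the Lie superalgebra `L`: `ι` is an injective linear map satisfying the
super-commutation relations, its image generates `U`, and the pair has the
universal property. -/
structure IsUEA (F : Type*) {L : Type*} [Field F] [AddCommGroup L] [Module F L]
    (S : LieSuperStruct F L) (U : Type*) [Ring U] [Algebra F U]
    (ι : L →ₗ[F] U) : Prop where
  rel_even : ∀ x ∈ S.L0, ∀ y : L, ι x * ι y - ι y * ι x = ι (S.bracket x y)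
  rel_odd : ∀ x ∈ S.L1, ∀ y ∈ S.L1, ι x * ι y + ι y * ι x = ι (S.bracket x y)
  inj : Function.Injective ι
  gen : Algebra.adjoin F (Set.range ι) = ⊤
  univ : ∀ (B : Type) [Ring B] [Algebra F B] (φ : L →ₗ[F] B),
    (∀ x ∈ S.L0, ∀ y : L, φ x * φ y - φ y * φ x = φ (S.bracket x y)) →
    (∀ x ∈ S.L1, ∀ y ∈ S.L1, φ x * φ y + φ y * φ x = φ (S.bracket x y)) →
    ∃! ψ : U →ₐ[F] B, ∀ x : L, ψ (ι x) = φ x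

/-- A restricted Lie superalgebra: a Lie superalgebra together with a `p`-map on
the even part satisfying `ad (x^{[p]}) = (ad x)^p` and `(c • x)^{[p]} = c^p • x^{[p]}`. -/
structure RestrictedLieSuperStruct (F : Type*) (L : Type*) [Field F]
    [AddCommGroup L] [Module F L] (p : ℕ) extends LieSuperStruct F L where
  pmap : L → L
  pmap_mem : ∀ x ∈ L0, pmap x ∈ L0
  pmap_smul : ∀ (c : F), ∀ x ∈ L0, pmap (c • x) = c ^ p • pmap x
  pmap_ad : ∀ x ∈ L0, ∀ y : L,
    bracket (pmap x) y = ((bracket x : Module.End F L) ^ p) y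

namespace RestrictedLieSuperStruct

variable {F L : Type*} [Field F] [AddCommGroup L] [Module F L] {p : ℕ}

/-- A subset of the even part is `p`-nilpotent (with bounded exponent) if some
iterate of the `p`-map kills all of its elements. -/
def IsPNilpotentSet (S : RestrictedLieSuperStruct F L p) (T : Set L) : Prop :=
  ∃ n : ℕ, ∀ x ∈ T, S.pmap^[n] x = 0

/-- `A` is a restricted (i.e. `p`-map closed) submodule. -/
def IsRestricted (S : RestrictedLieSuperStruct F L p) (A : Submodule F L) : Prop :=
  ∀ x ∈ A, x ∈ S.L0 → S.pmap x ∈ A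

end RestrictedLieSuperStruct

/-- `u` together with `ι : L → u` is (a realization of) the restricted enveloping
algebra of the restricted Lie superalgebra `L`. -/
structure IsRUEA (F : Type*) {L : Type*} [Field F] [AddCommGroup L] [Module F L]
    {p : ℕ} (S : RestrictedLieSuperStruct F L p) (U : Type*) [Ring U]
    [Algebra F U] (ι : L →ₗ[F] U) : Prop where
  rel_even : ∀ x ∈ S.L0, ∀ y : L, ι x * ι y - ι y * ι x = ι (S.bracket x y)
  rel_odd : ∀ x ∈ S.L1, ∀ y ∈ S.L1, ι x * ι y + ι y * ι x = ι (S.bracket x y)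
  rel_p : ∀ x ∈ S.L0, ι (S.pmap x) = ι x ^ p
  inj : Function.Injective ι
  gen : Algebra.adjoin F (Set.range ι) = ⊤
  univ : ∀ (B : Type) [Ring B] [Algebra F B] (φ : L →ₗ[F] B),
    (∀ x ∈ S.L0, ∀ y : L, φ x * φ y - φ y * φ x = φ (S.bracket x y)) →
    (∀ x ∈ S.L1, ∀ y ∈ S.L1, φ x * φ y + φ y * φ x = φ (S.bracket x y)) →
    (∀ x ∈ S.L0, φ (S.pmap x) = φ x ^ p) →
    ∃! ψ : U →ₐ[F] B, ∀ x : L, ψ (ι x) = φ x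

/-!
Since `L` is nilpotent and `ad (x^{[p]}) = (ad x)^p`, some iterate `x^{[p]^c}` of the `p`-map is
central in `L` for every even `x`, so `ι(x)^{p^c} = ι(x^{[p]^c})` is central in `u(L)`. The odd
part is a line commuting with `L₀`, so `ι(L₁)` is central as well. Modulo the commutator ideal
`I = [u(L), u(L)] u(L)` the algebra is commutative of characteristic `p`, so `u ↦ u^{p^c}` is a
ring endomorphism there, and therefore `u^{p^c} ∈ Z(u(L)) + I` for every `u`. Writing
`y^{p^c} = z + w` with `z` central and `w ∈ I`, we get
`(ad y)^{p^{c+m}} = (ad (y^{p^c}))^{p^m} = (ad w)^{p^m} = ad (w^{p^m}) = 0`.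
-/

section Frobenius

variable {A : Type*} [Ring A]

theorem Commute.add_pow_char_pow_of_algebra (F : Type*) [Field F] [Algebra F A] (p : ℕ)
    [CharP F p] [Fact p.Prime] {a b : A} (h : Commute a b) (k : ℕ) :
    (a + b) ^ p ^ k = a ^ p ^ k + b ^ p ^ k := by
  rcases subsingleton_or_nontrivial A with _ | _
  · exact Subsingleton.elim _ _
  · have := expChar_of_injective_algebraMap (algebraMap F A).injective p
    exact add_pow_expChar_pow_of_commute p k h

theorem Commute.sub_pow_char_pow_of_algebra (F : Type*) [Field F] [Algebra F A] (p : ℕ)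
    [CharP F p] [Fact p.Prime] {a b : A} (h : Commute a b) (k : ℕ) :
    (a - b) ^ p ^ k = a ^ p ^ k - b ^ p ^ k := by
  rcases subsingleton_or_nontrivial A with _ | _
  · exact Subsingleton.elim _ _
  · have := expChar_of_injective_algebraMap (algebraMap F A).injective p
    exact sub_pow_expChar_pow_of_commute p k h

end Frobenius

section CommIdeal

variable {F U : Type*} [Field F] [Ring U] [Algebra F U]

theorem mul_mem_commIdeal_left (u : U) {w : U} (hw : w ∈ commIdeal F U) :
    u * w ∈ commIdeal F U := by
  induction hw using Submodule.span_induction with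
  | mem x hx =>
    obtain ⟨a, x', y', b, rfl⟩ := hx
    exact Submodule.subset_span ⟨u * a, x', y', b, by simp only [mul_assoc]⟩
  | zero => simp
  | add a b _ _ ha hb => simpa [mul_add] using Submodule.add_mem _ ha hb
  | smul c a _ ha => simpa [mul_smul_comm] using Submodule.smul_mem _ c ha

theorem mul_mem_commIdeal_right {w : U} (hw : w ∈ commIdeal F U) (u : U) :
    w * u ∈ commIdeal F U := by
  induction hw using Submodule.span_induction with
  | mem x hx =>
    obtain ⟨a, x', y', b, rfl⟩ := hx
    exact Submodule.subset_span ⟨a, x', y', b * u, by simp only [mul_assoc]⟩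
  | zero => simp
  | add a b _ _ ha hb => simpa [add_mul] using Submodule.add_mem _ ha hb
  | smul c a _ ha => simpa [smul_mul_assoc] using Submodule.smul_mem _ c ha

theorem commutator_mem_commIdeal (a b : U) : a * b - b * a ∈ commIdeal F U :=
  Submodule.subset_span ⟨1, a, b, 1, by rw [one_mul, mul_one]⟩

variable (F U) in
def commIdealCon : RingCon U where
  r a b := a - b ∈ commIdeal F U
  iseqv.refl a := by simp
  iseqv.symm h := by simpa using Submodule.neg_mem _ h
  iseqv.trans h₁ h₂ := by simpa using Submodule.add_mem _ h₁ h₂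
  add' {a b c d} h₁ h₂ := by
    rw [show a + c - (b + d) = (a - b) + (c - d) by abel]
    exact Submodule.add_mem _ h₁ h₂
  mul' {a b c d} h₁ h₂ := by
    rw [show a * c - b * d = (a - b) * c + b * (c - d) by noncomm_ring]
    exact Submodule.add_mem _ (mul_mem_commIdeal_right h₁ c) (mul_mem_commIdeal_left b h₂)

theorem commIdealCon_mk'_eq_iff {a b : U} :
    (commIdealCon F U).mk' a = (commIdealCon F U).mk' b ↔ a - b ∈ commIdeal F U :=
  RingCon.eq _

theorem commute_commIdealCon_mk' (a b : U) :
    Commute ((commIdealCon F U).mk' a) ((commIdealCon F U).mk' b) := by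
  rw [Commute, SemiconjBy, ← map_mul, ← map_mul, commIdealCon_mk'_eq_iff]
  exact commutator_mem_commIdeal a b

theorem mul_pow_sub_mem_commIdeal (a b : U) (n : ℕ) :
    (a * b) ^ n - a ^ n * b ^ n ∈ commIdeal F U := by
  rw [← commIdealCon_mk'_eq_iff, map_mul, map_pow, map_mul, map_pow, map_pow]
  exact (commute_commIdealCon_mk' a b).mul_pow n

theorem add_pow_char_pow_sub_mem_commIdeal (p : ℕ) [CharP F p] [Fact p.Prime] (a b : U)
    (k : ℕ) : (a + b) ^ p ^ k - (a ^ p ^ k + b ^ p ^ k) ∈ commIdeal F U := by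
  rw [← commIdealCon_mk'_eq_iff, map_add, map_pow, map_add, map_pow, map_pow]
  exact (commute_commIdealCon_mk' a b).add_pow_char_pow_of_algebra F p k

variable (F U) in
def centerSupCommIdeal : Submodule F U :=
  Subalgebra.toSubmodule (Subalgebra.center F U) ⊔ commIdeal F U

theorem mem_centerSupCommIdeal_of_mem_center {z : U} (hz : z ∈ Subalgebra.center F U) :
    z ∈ centerSupCommIdeal F U :=
  Submodule.mem_sup_left hz

theorem mul_mem_centerSupCommIdeal {a b : U} (ha : a ∈ centerSupCommIdeal F U)
    (hb : b ∈ centerSupCommIdeal F U) : a * b ∈ centerSupCommIdeal F U := by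
  obtain ⟨za, hza, wa, hwa, rfl⟩ := Submodule.mem_sup.mp ha
  obtain ⟨zb, hzb, wb, hwb, rfl⟩ := Submodule.mem_sup.mp hb
  rw [show (za + wa) * (zb + wb) = za * zb + (za * wb + wa * (zb + wb)) by noncomm_ring]
  exact Submodule.add_mem_sup (Subalgebra.mul_mem _ hza hzb)
    (Submodule.add_mem _ (mul_mem_commIdeal_left za hwb) (mul_mem_commIdeal_right hwa _))

variable (p : ℕ) [CharP F p] [Fact p.Prime] {k : ℕ}

theorem add_pow_char_pow_mem_centerSupCommIdeal {a b : U}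
    (ha : a ^ p ^ k ∈ centerSupCommIdeal F U) (hb : b ^ p ^ k ∈ centerSupCommIdeal F U) :
    (a + b) ^ p ^ k ∈ centerSupCommIdeal F U := by
  rw [← sub_add_cancel ((a + b) ^ p ^ k) (a ^ p ^ k + b ^ p ^ k)]
  exact Submodule.add_mem _
    (Submodule.mem_sup_right (add_pow_char_pow_sub_mem_commIdeal p a b k))
    (Submodule.add_mem _ ha hb)

theorem pow_char_pow_mem_centerSupCommIdeal_of_mem_adjoin {s : Set U}
    (hs : ∀ g ∈ s, g ^ p ^ k ∈ centerSupCommIdeal F U) {u : U}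
    (hu : u ∈ Algebra.adjoin F s) : u ^ p ^ k ∈ centerSupCommIdeal F U := by
  induction hu using Algebra.adjoin_induction with
  | mem g hg => exact hs g hg
  | algebraMap r =>
    rw [← map_pow]
    exact mem_centerSupCommIdeal_of_mem_center (Subalgebra.algebraMap_mem _ _)
  | add a b _ _ ha hb => exact add_pow_char_pow_mem_centerSupCommIdeal p ha hb
  | mul a b _ _ ha hb =>
    rw [← sub_add_cancel ((a * b) ^ p ^ k) (a ^ p ^ k * b ^ p ^ k)]
    exact Submodule.add_mem _ (Submodule.mem_sup_right (mul_pow_sub_mem_commIdeal a b _))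
      (mul_mem_centerSupCommIdeal ha hb)

end CommIdeal

section Engel

variable {F U : Type*} [Field F] [Ring U] [Algebra F U]

theorem engelIter_eq_mulRight_sub_mulLeft_pow_apply (y : U) (n : ℕ) (x : U) :
    engelIter y n x = ((LinearMap.mulRight F y - LinearMap.mulLeft F y) ^ n) x := by
  induction n with
  | zero => rfl
  | succ n ih =>
    rw [engelIter, Function.iterate_succ_apply', ← engelIter, ih, pow_succ',
      Module.End.mul_apply]
    rfl

theorem mulRight_sub_mulLeft_pow_char_pow (p : ℕ) [CharP F p] [Fact p.Prime] (a : U) (k : ℕ) :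
    (LinearMap.mulRight F a - LinearMap.mulLeft F a) ^ p ^ k
      = LinearMap.mulRight F (a ^ p ^ k) - LinearMap.mulLeft F (a ^ p ^ k) := by
  rw [(LinearMap.commute_mulLeft_right a a).symm.sub_pow_char_pow_of_algebra F p k,
    LinearMap.pow_mulRight, LinearMap.pow_mulLeft]

theorem engelIter_eq_zero_of_pow_mem_centerSupCommIdeal (p : ℕ) [CharP F p] [Fact p.Prime]
    {k m : ℕ} (hnil : ∀ r ∈ commIdeal F U, r ^ p ^ m = 0) {y : U}
    (hy : y ^ p ^ k ∈ centerSupCommIdeal F U) (x : U) : engelIter y (p ^ (k + m)) x = 0 := by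
  obtain ⟨z, hz, w, hw, hzw⟩ := Submodule.mem_sup.mp hy
  have hcentral : LinearMap.mulRight F (z + w) - LinearMap.mulLeft F (z + w)
      = LinearMap.mulRight F w - LinearMap.mulLeft F w := by
    ext t
    simp only [LinearMap.sub_apply, LinearMap.mulRight_apply, LinearMap.mulLeft_apply, mul_add,
      add_mul]
    rw [Subalgebra.mem_center_iff (R := F).mp hz t, add_sub_add_left_eq_sub]
  rw [engelIter_eq_mulRight_sub_mulLeft_pow_apply (F := F), pow_add, pow_mul,
    mulRight_sub_mulLeft_pow_char_pow p, ← hzw, hcentral, mulRight_sub_mulLeft_pow_char_pow p,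
    hnil w hw]
  simp

end Engel

namespace LieSuperStruct

variable {F L : Type*} [Field F] [AddCommGroup L] [Module F L] (S : LieSuperStruct F L)

theorem exists_even_add_odd (x : L) : ∃ x₀ ∈ S.L0, ∃ x₁ ∈ S.L1, x₀ + x₁ = x :=
  Submodule.mem_sup.mp (S.compl.sup_eq_top ▸ Submodule.mem_top)

theorem lcs_succ (n : ℕ) : S.lcs (n + 1) = S.bracketSpan (S.lcs n) ⊤ := rfl

theorem lcs_eq_bot_of_le {c n : ℕ} (hc : S.lcs c = ⊥) (hn : c ≤ n) : S.lcs n = ⊥ := by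
  induction n, hn using Nat.le_induction with
  | base => exact hc
  | succ n _ ih =>
    rw [lcs_succ, ih, eq_bot_iff, bracketSpan, Submodule.span_le]
    rintro _ ⟨x, hx, y, -, rfl⟩
    rw [(Submodule.mem_bot F).mp hx, map_zero, LinearMap.zero_apply]
    exact Submodule.zero_mem _

theorem pow_bracket_apply_mem_lcs {x : L} (hx : x ∈ S.L0) (n : ℕ) (v : L) :
    ((S.bracket x : Module.End F L) ^ n) v ∈ S.lcs n := by
  induction n with
  | zero => exact Submodule.mem_top
  | succ n ih =>
    rw [pow_succ', Module.End.mul_apply, S.anti_even x hx, lcs_succ]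
    exact Submodule.neg_mem _ (Submodule.subset_span ⟨_, ih, x, Submodule.mem_top, rfl⟩)

end LieSuperStruct

namespace RestrictedLieSuperStruct

variable {F L : Type*} [Field F] [AddCommGroup L] [Module F L] {p : ℕ}
  (S : RestrictedLieSuperStruct F L p)

theorem iterate_pmap_mem {x : L} (hx : x ∈ S.L0) (j : ℕ) : S.pmap^[j] x ∈ S.L0 := by
  induction j with
  | zero => exact hx
  | succ j ih => exact Function.iterate_succ_apply' S.pmap j x ▸ S.pmap_mem _ ih

theorem bracket_iterate_pmap {x : L} (hx : x ∈ S.L0) (j : ℕ) :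
    S.bracket (S.pmap^[j] x) = (S.bracket x : Module.End F L) ^ p ^ j := by
  induction j with
  | zero => simp
  | succ j ih =>
    ext v
    rw [Function.iterate_succ_apply', S.pmap_ad _ (S.iterate_pmap_mem hx j), ih, ← pow_mul,
      ← pow_succ]

theorem exists_bracket_iterate_pmap_eq_zero (hp : 1 < p) (hS : S.IsNilpotent) :
    ∃ c, ∀ x ∈ S.L0, S.bracket (S.pmap^[c] x) = 0 := by
  obtain ⟨c, hc⟩ := hS
  refine ⟨c, fun x hx => LinearMap.ext fun v => ?_⟩
  have hv := S.pow_bracket_apply_mem_lcs hx (p ^ c) v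
  rw [S.lcs_eq_bot_of_le hc (Nat.lt_pow_self hp).le] at hv
  rw [S.bracket_iterate_pmap hx, (Submodule.mem_bot F).mp hv, LinearMap.zero_apply]

end RestrictedLieSuperStruct

namespace IsRUEA

variable {F L : Type*} [Field F] [AddCommGroup L] [Module F L] {p : ℕ}
  {S : RestrictedLieSuperStruct F L p} {U : Type*} [Ring U] [Algebra F U] {ι : L →ₗ[F] U}

theorem mem_center_of_forall_commute (hU : IsRUEA F S U ι) {z : U}
    (hz : ∀ w : L, ι w * z = z * ι w) :
    z ∈ Subalgebra.center F U := by
  have hle : Algebra.adjoin F (Set.range ι) ≤ Subalgebra.centralizer F {z} :=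
    Algebra.adjoin_le <| Set.range_subset_iff.mpr fun w =>
      (Subalgebra.mem_centralizer_iff F).mpr fun g hg => by
        rw [Set.mem_singleton_iff.mp hg]
        exact (hz w).symm
  rw [hU.gen] at hle
  exact Subalgebra.mem_center_iff.mpr fun u =>
    ((Subalgebra.mem_centralizer_iff F).mp (hle Algebra.mem_top) z rfl).symm

theorem pow_char_pow_eq_iterate_pmap (hU : IsRUEA F S U ι) {x : L} (hx : x ∈ S.L0) (j : ℕ) :
    ι x ^ p ^ j = ι (S.pmap^[j] x) := by
  induction j with
  | zero => simp
  | succ j ih =>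
    rw [Function.iterate_succ_apply', hU.rel_p _ (S.iterate_pmap_mem hx j), ← ih, ← pow_mul,
      ← pow_succ]

theorem mem_center_of_bracket_eq_zero (hU : IsRUEA F S U ι) {x : L} (hx : x ∈ S.L0)
    (h : S.bracket x = 0) :
    ι x ∈ Subalgebra.center F U :=
  hU.mem_center_of_forall_commute fun w => by
    have hw := hU.rel_even x hx w
    rw [h, LinearMap.zero_apply, map_zero, sub_eq_zero] at hw
    exact hw.symm

theorem mem_center_of_mem_L1 (hU : IsRUEA F S U ι) (hdim : Module.rank F S.L1 ≤ 1)
    (h10 : ∀ x ∈ S.L1, ∀ y ∈ S.L0, S.bracket x y = 0) {x : L} (hx : x ∈ S.L1) :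
    ι x ∈ Subalgebra.center F U := by
  obtain ⟨v, hv⟩ := rank_le_one_iff.mp hdim
  have hline : ∀ y ∈ S.L1, ∃ r : F, y = r • (v : L) := fun y hy => by
    obtain ⟨r, hr⟩ := hv ⟨y, hy⟩
    exact ⟨r, congrArg Subtype.val hr.symm⟩
  refine hU.mem_center_of_forall_commute fun w => ?_
  obtain ⟨w₀, hw₀, w₁, hw₁, rfl⟩ := S.exists_even_add_odd w
  have h₀ : ι w₀ * ι x = ι x * ι w₀ := by
    have h := hU.rel_even w₀ hw₀ x
    rwa [S.anti_even w₀ hw₀ x, h10 x hx w₀ hw₀, neg_zero, map_zero, sub_eq_zero] at h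
  have h₁ : ι w₁ * ι x = ι x * ι w₁ := by
    obtain ⟨a, rfl⟩ := hline x hx
    obtain ⟨b, rfl⟩ := hline w₁ hw₁
    rw [map_smul, map_smul, smul_mul_smul_comm, smul_mul_smul_comm, mul_comm]
  rw [map_add, add_mul, mul_add, h₀, h₁]

theorem pow_char_pow_mem_centerSupCommIdeal [CharP F p] [Fact p.Prime] (hU : IsRUEA F S U ι)
    {c : ℕ} (hc : ∀ x ∈ S.L0, S.bracket (S.pmap^[c] x) = 0) (hdim : Module.rank F S.L1 ≤ 1)
    (h10 : ∀ x ∈ S.L1, ∀ y ∈ S.L0, S.bracket x y = 0) (u : U) :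
    u ^ p ^ c ∈ centerSupCommIdeal F U := by
  refine pow_char_pow_mem_centerSupCommIdeal_of_mem_adjoin p ?_ (hU.gen ▸ Algebra.mem_top)
  rintro _ ⟨x, rfl⟩
  obtain ⟨x₀, hx₀, x₁, hx₁, rfl⟩ := S.exists_even_add_odd x
  rw [map_add]
  refine add_pow_char_pow_mem_centerSupCommIdeal p ?_ ?_ <;>
    refine mem_centerSupCommIdeal_of_mem_center ?_
  · rw [hU.pow_char_pow_eq_iterate_pmap hx₀]
    exact hU.mem_center_of_bracket_eq_zero (S.iterate_pmap_mem hx₀ c) (hc x₀ hx₀)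
  · exact Subalgebra.pow_mem _ (hU.mem_center_of_mem_L1 hdim h10 hx₁) _

end IsRUEA

theorem ruea_bounded_engel_general {F L : Type*} [Field F] [AddCommGroup L] [Module F L]
    (p : ℕ) [CharP F p] (hp : 2 < p)
    (S : RestrictedLieSuperStruct F L p)
    (U : Type*) [Ring U] [Algebra F U] (ι : L →ₗ[F] U) (hU : IsRUEA F S U ι)
    (hnilp : S.toLieSuperStruct.IsNilpotent)
    (hdim : Module.rank F S.L1 = 1)
    (h10 : ∀ x ∈ S.L1, ∀ y ∈ S.L0, S.bracket x y = 0)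
    (m : ℕ) (hnil : ∀ r ∈ commIdeal F U, r ^ (p ^ m) = 0) :
    IsBoundedLieEngel U := by
  have hprime : p.Prime := CharP.char_is_prime_of_two_le F p hp.le
  have : Fact p.Prime := ⟨hprime⟩
  obtain ⟨c, hc⟩ := S.exists_bracket_iterate_pmap_eq_zero hprime.one_lt hnilp
  refine ⟨p ^ (c + m), pow_pos hprime.pos _, fun x y => ?_⟩
  exact engelIter_eq_zero_of_pow_mem_centerSupCommIdeal p hnil
    (hU.pow_char_pow_mem_centerSupCommIdeal hc hdim.le h10 y) x

/-- a restricted Lie superalgebra with `L` nilpotent, `(L₀,L₀)`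
`p`-nilpotent, `dim L₁ = 1`, `(L₁,L₀) = 0`, and `[u(L),u(L)]u(L)` nil of bounded
index `p^m`, has bounded Lie Engel restricted enveloping algebra. -/
theorem ruea_bounded_engel {F L : Type*} [Field F] [AddCommGroup L] [Module F L]
    (p : ℕ) [CharP F p] (hp : 2 < p)
    (S : RestrictedLieSuperStruct F L p)
    (U : Type*) [Ring U] [Algebra F U] (ι : L →ₗ[F] U) (hU : IsRUEA F S U ι)
    (hnilp : S.toLieSuperStruct.IsNilpotent)
    (h00 : S.IsPNilpotentSet
      (S.toLieSuperStruct.bracketSpan S.L0 S.L0 : Set L))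
    (hdim : Module.rank F S.L1 = 1)
    (h10 : ∀ x ∈ S.L1, ∀ y ∈ S.L0, S.bracket x y = 0)
    (m : ℕ) (hnil : ∀ r ∈ commIdeal F U, r ^ (p ^ m) = 0) :
    IsBoundedLieEngel U :=
  ruea_bounded_engel_general p hp S U ι hU hnilp hdim h10 m hnil
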